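/- arXiv:2605.06228 — 2 statements merged into one kernel-verified Lean document; each statement's English description precedes it below -/
import Mathlib

section
/- If f : ℝ^n → ℝ is C¹ with L-Lipschitz gradient, then the gradient of the Gaussian smoothing converges to the true gradient in the vanishing-smoothing limit, with the quantitative bound ‖∇f_σ(x) − ∇f(x)‖₂ ≤ Lσ√n for every x, so that ∇f_σ(x) → ∇f(x) as σ → 0. -/
/-!
Differentiating under the integral sign, which the Lipschitz bound on `∇f` and the finite second
moment of the Gaussian justify, gives `∇f_σ(x) = E[∇f(x + σw)]`. Hence
`‖∇f_σ(x) - ∇f(x)‖ ≤ E‖∇f(x + σw) - ∇f(x)‖ ≤ Lσ E‖w‖ ≤ Lσ √(E‖w‖²) = Lσ√n`.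
-/

open MeasureTheory ProbabilityTheory

noncomputable def stdGaussian (m : ℕ) : Measure (EuclideanSpace ℝ (Fin m)) :=
  (Measure.pi fun _ : Fin m => gaussianReal 0 1).map
    (MeasurableEquiv.toLp 2 (Fin m → ℝ))

open scoped NNReal RealInnerProductSpace

lemma stdGaussian_eq (n : ℕ) :
    stdGaussian n = ProbabilityTheory.stdGaussian (EuclideanSpace ℝ (Fin n)) :=
  map_pi_eq_stdGaussian

lemma integral_norm_le_sqrt_integral_norm_sq {Ω F : Type*} [MeasurableSpace Ω]
    [NormedAddCommGroup F] {μ : Measure Ω} [IsProbabilityMeasure μ] {X : Ω → F}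
    (hX : MemLp X 2 μ) :
    ∫ ω, ‖X ω‖ ∂μ ≤ √(∫ ω, ‖X ω‖ ^ 2 ∂μ) := by
  have h := variance_nonneg (fun ω => ‖X ω‖) μ
  rw [variance_eq_sub hX.norm] at h
  exact Real.le_sqrt_of_sq_le (by simpa using h)

section StdGaussian

variable {E : Type*} [NormedAddCommGroup E] [InnerProductSpace ℝ E] [FiniteDimensional ℝ E]
  [MeasurableSpace E] [BorelSpace E]

lemma integral_norm_sq_stdGaussian :
    ∫ x, ‖x‖ ^ 2 ∂(ProbabilityTheory.stdGaussian E) = Module.finrank ℝ E := by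
  set b := stdOrthonormalBasis ℝ E
  have hcoord (i) : ∫ x, ⟪b i, x⟫ ^ 2 ∂(ProbabilityTheory.stdGaussian E) = 1 := by
    have := covarianceBilin_apply (μ := ProbabilityTheory.stdGaussian E) IsGaussian.memLp_two_id
      (b i) (b i)
    simp only [covarianceBilin_stdGaussian, id_eq, integral_id_stdGaussian, sub_zero, ← sq] at this
    rw [← this, innerSL_apply_apply ℝ, real_inner_self_eq_norm_sq, b.orthonormal.1 i, one_pow]
  simp_rw [← b.sum_sq_inner_right]
  rw [integral_finsetSum _ fun i _ => ?_]
  · simp [hcoord]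
  · exact (IsGaussian.memLp_two_id.const_inner (b i)).integrable_sq

lemma integral_norm_stdGaussian_le :
    ∫ x, ‖x‖ ∂(ProbabilityTheory.stdGaussian E) ≤ √(Module.finrank ℝ E) := by
  simpa [integral_norm_sq_stdGaussian] using
    integral_norm_le_sqrt_integral_norm_sq
      (IsGaussian.memLp_two_id (μ := ProbabilityTheory.stdGaussian E))

end StdGaussian

section Smoothing

variable {E F : Type*} [NormedAddCommGroup E] [NormedSpace ℝ E] [NormedAddCommGroup F]
  [NormedSpace ℝ F] {f : E → F} {L : ℝ≥0}

lemma norm_fderiv_le_of_lipschitzWith (hf' : LipschitzWith L (fderiv ℝ f)) (x z : E) :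
    ‖fderiv ℝ f z‖ ≤ ‖fderiv ℝ f x‖ + L * ‖z - x‖ := by
  linarith [norm_le_norm_add_norm_sub' (fderiv ℝ f z) (fderiv ℝ f x), hf'.norm_sub_le z x]

lemma norm_image_sub_le_of_lipschitzWith_fderiv (hf : Differentiable ℝ f)
    (hf' : LipschitzWith L (fderiv ℝ f)) (x z : E) :
    ‖f z - f x‖ ≤ (‖fderiv ℝ f x‖ + L * ‖z - x‖) * ‖z - x‖ := by
  refine (convex_closedBall x ‖z - x‖).norm_image_sub_le_of_norm_fderiv_le
    (fun y _ => hf y) (fun y hy => ?_) (Metric.mem_closedBall_self (norm_nonneg _)) ?_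
  · rw [Metric.mem_closedBall, dist_eq_norm] at hy
    exact (norm_fderiv_le_of_lipschitzWith hf' x y).trans (by gcongr)
  · rw [Metric.mem_closedBall, dist_eq_norm]

variable [MeasurableSpace E] [OpensMeasurableSpace E] [SecondCountableTopology E]
  {μ : Measure E}

lemma integrable_fderiv_comp_add_smul (hf' : LipschitzWith L (fderiv ℝ f))
    (hμ : Integrable id μ) [IsFiniteMeasure μ] (σ : ℝ) (y : E) :
    Integrable (fun w => fderiv ℝ f (y + σ • w)) μ := by
  refine ((integrable_const ‖fderiv ℝ f y‖).add (hμ.norm.const_mul (L * |σ|))).mono'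
    (hf'.continuous.comp (by fun_prop)).aestronglyMeasurable (.of_forall fun w => ?_)
  have := norm_fderiv_le_of_lipschitzWith hf' y (y + σ • w)
  simp only [add_sub_cancel_left, norm_smul, Real.norm_eq_abs] at this
  simp only [id_eq, Pi.add_apply]
  linarith

lemma integrable_comp_add_smul (hf : Differentiable ℝ f) (hf' : LipschitzWith L (fderiv ℝ f))
    (hμ : MemLp id 2 μ) [IsFiniteMeasure μ] (σ : ℝ) (y : E) :
    Integrable (fun w => f (y + σ • w)) μ := by
  have hbound : Integrable
      (fun w => ‖f y‖ + ‖fderiv ℝ f y‖ * |σ| * ‖w‖ + L * σ ^ 2 * ‖w‖ ^ 2) μ :=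
    ((integrable_const _).add ((hμ.integrable one_le_two).norm.const_mul _)).add
      ((hμ.integrable_norm_pow two_ne_zero).const_mul _)
  refine hbound.mono' (hf.continuous.comp (by fun_prop)).aestronglyMeasurable
    (.of_forall fun w => ?_)
  have hsub := norm_image_sub_le_of_lipschitzWith_fderiv hf hf' y (y + σ • w)
  rw [add_sub_cancel_left, norm_smul, Real.norm_eq_abs] at hsub
  have hexpand : (‖fderiv ℝ f y‖ + L * (|σ| * ‖w‖)) * (|σ| * ‖w‖)
      = ‖fderiv ℝ f y‖ * |σ| * ‖w‖ + L * σ ^ 2 * ‖w‖ ^ 2 := by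
    rw [← sq_abs σ]; ring
  linarith [norm_le_norm_add_norm_sub' (f (y + σ • w)) (f y)]

theorem hasFDerivAt_integral_comp_add_smul (hf : Differentiable ℝ f)
    (hf' : LipschitzWith L (fderiv ℝ f)) (hμ : MemLp id 2 μ) [IsFiniteMeasure μ] (σ : ℝ) (x : E) :
    HasFDerivAt (fun y => ∫ w, f (y + σ • w) ∂μ) (∫ w, fderiv ℝ f (x + σ • w) ∂μ) x := by
  have hμ₁ : Integrable id μ := hμ.integrable one_le_two
  refine hasFDerivAt_integral_of_dominated_of_fderiv_le (Metric.ball_mem_nhds x one_pos)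
    (F' := fun y w => fderiv ℝ f (y + σ • w))
    (bound := fun w => ‖fderiv ℝ f x‖ + L + L * |σ| * ‖w‖)
    (.of_forall fun y => (integrable_comp_add_smul hf hf' hμ σ y).aestronglyMeasurable)
    (integrable_comp_add_smul hf hf' hμ σ x)
    (integrable_fderiv_comp_add_smul hf' hμ₁ σ x).aestronglyMeasurable
    (.of_forall fun w y hy => ?_) ((integrable_const _).add (hμ₁.norm.const_mul _))
    (.of_forall fun w y _ => ?_)
  · rw [Metric.mem_ball, dist_eq_norm] at hy
    have hdist : ‖y + σ • w - x‖ ≤ 1 + |σ| * ‖w‖ := by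
      rw [add_sub_right_comm, ← Real.norm_eq_abs, ← norm_smul]
      exact (norm_add_le _ _).trans (by gcongr)
    have := norm_fderiv_le_of_lipschitzWith hf' x (y + σ • w)
    have := mul_le_mul_of_nonneg_left hdist L.coe_nonneg
    linarith
  · simpa [Function.comp_def] using
      (hf (y + σ • w)).hasFDerivAt.comp y ((hasFDerivAt_id y).add_const (σ • w))

theorem norm_integral_fderiv_comp_add_smul_sub_le [CompleteSpace F]
    (hf' : LipschitzWith L (fderiv ℝ f)) (hμ : Integrable id μ) [IsProbabilityMeasure μ]
    (σ : ℝ) (x : E) :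
    ‖∫ w, fderiv ℝ f (x + σ • w) ∂μ - fderiv ℝ f x‖ ≤ L * |σ| * ∫ w, ‖w‖ ∂μ := by
  have hint := integrable_fderiv_comp_add_smul hf' hμ σ x
  calc ‖∫ w, fderiv ℝ f (x + σ • w) ∂μ - fderiv ℝ f x‖
      = ‖∫ w, (fderiv ℝ f (x + σ • w) - fderiv ℝ f x) ∂μ‖ := by
        rw [integral_sub hint (integrable_const _), integral_const, probReal_univ, one_smul]
    _ ≤ ∫ w, L * |σ| * ‖w‖ ∂μ := by
        refine norm_integral_le_of_norm_le (hμ.norm.const_mul _) (.of_forall fun w => ?_)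
        have := hf'.norm_sub_le (x + σ • w) x
        rwa [add_sub_cancel_left, norm_smul, Real.norm_eq_abs, ← mul_assoc] at this
    _ = L * |σ| * ∫ w, ‖w‖ ∂μ := integral_const_mul _ _

end Smoothing

section Gradient

variable {E : Type*} [NormedAddCommGroup E] [InnerProductSpace ℝ E] [CompleteSpace E]
  {f : E → ℝ} {L : ℝ≥0}

lemma LipschitzWith.fderiv_of_gradient (h : LipschitzWith L (gradient f)) :
    LipschitzWith L (fderiv ℝ f) := by
  simpa [Function.comp_def, gradient] using (InnerProductSpace.toDual ℝ E).lipschitz.comp h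

theorem norm_gradient_integral_comp_add_smul_sub_le [MeasurableSpace E] [OpensMeasurableSpace E]
    [SecondCountableTopology E] {μ : Measure E} [IsProbabilityMeasure μ] (hμ : MemLp id 2 μ)
    (hf : Differentiable ℝ f) (hgrad : LipschitzWith L (gradient f)) (σ : ℝ) (x : E) :
    ‖gradient (fun y => ∫ w, f (y + σ • w) ∂μ) x - gradient f x‖ ≤ L * |σ| * ∫ w, ‖w‖ ∂μ := by
  have hf' := hgrad.fderiv_of_gradient
  rw [gradient, gradient, (hasFDerivAt_integral_comp_add_smul hf hf' hμ σ x).fderiv, ← map_sub,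
    LinearIsometryEquiv.norm_map]
  exact norm_integral_fderiv_comp_add_smul_sub_le hf' (hμ.integrable one_le_two) σ x

end Gradient

/-- The gradient of the Gaussian smoothing converges to the true gradient as σ → 0,
with quantitative bound ‖∇f_σ(x) − ∇f(x)‖ ≤ Lσ√n. -/
theorem gradient_smoothing_convergence (n : ℕ) (L : NNReal)
    (f : EuclideanSpace ℝ (Fin n) → ℝ)
    (hf : ContDiff ℝ 1 f) (hgrad : LipschitzWith L (fun x => gradient f x)) :
    (∀ σ : ℝ, 0 < σ → ∀ x : EuclideanSpace ℝ (Fin n),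
      ‖gradient (fun y => ∫ w, f (y + σ • w) ∂(stdGaussian n)) x - gradient f x‖
        ≤ (L : ℝ) * σ * Real.sqrt n) ∧
    (∀ x : EuclideanSpace ℝ (Fin n), Filter.Tendsto
      (fun σ : ℝ => gradient (fun y => ∫ w, f (y + σ • w) ∂(stdGaussian n)) x)
      (nhdsWithin 0 (Set.Ioi 0)) (nhds (gradient f x))) := by
  have hbound (σ : ℝ) (hσ : 0 < σ) (x : EuclideanSpace ℝ (Fin n)) :
      ‖gradient (fun y => ∫ w, f (y + σ • w) ∂(stdGaussian n)) x - gradient f x‖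
        ≤ L * σ * √n := by
    rw [stdGaussian_eq]
    calc _ ≤ L * |σ| * ∫ w, ‖w‖ ∂(ProbabilityTheory.stdGaussian _) :=
          norm_gradient_integral_comp_add_smul_sub_le IsGaussian.memLp_two_id
            (hf.differentiable one_ne_zero) hgrad σ x
      _ ≤ L * σ * √n := by
          rw [abs_of_pos hσ]
          gcongr
          simpa using integral_norm_stdGaussian_le (E := EuclideanSpace ℝ (Fin n))
  refine ⟨hbound, fun x => ?_⟩
  rw [tendsto_iff_norm_sub_tendsto_zero]
  refine squeeze_zero' (.of_forall fun σ => norm_nonneg _)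
    (eventually_nhdsWithin_of_forall fun σ hσ => hbound σ hσ x) ?_
  exact tendsto_nhdsWithin_of_tendsto_nhds (Continuous.tendsto' (by fun_prop) 0 0 (by simp))
end

section
/- In a finite-state MDP with deterministic policy π and discount γ ∈ [0,1), if the value function V satisfies the Bellman evaluation equation for the smoothed MDP, V_σ^π(s) = R_σ(s, π(s)) + γ Σ_{s'} V_σ^π(s') P_σ(s'|s, π(s)), where R_σ and P_σ are the Gaussian-smoothed reward and kernel, then V_σ^π coincides with E_{w∼N(0,I)}[Q_σ^π(s, π(s)+σw)], where Q_σ^π is the fixed point of the σ-smoothed Bellman operator. -/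
/-!
Both `V` and `s ↦ E_w[Qσ(s, π s + σ w)]` solve the policy-evaluation equation
`v = r + γ K v` of the smoothed MDP: for `V` this is the hypothesis, and for the Gaussian
average of `Qσ` it follows by integrating the fixed-point equation of `Qσ` along
`π s + σ w`, which is linear in the reward and the kernel. The averaged kernel `K` is
again stochastic, so `v ↦ r + γ K v` is a `|γ|`-contraction in the sup norm and the two
solutions agree.
-/

open MeasureTheory ProbabilityTheory

instance (m : ℕ) : IsProbabilityMeasure (stdGaussian m) :=
  Measure.isProbabilityMeasure_map (MeasurableEquiv.measurable _).aemeasurable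

section PolicyEvaluation

variable {S : Type*} [Fintype S]

lemma abs_le_one_of_stochastic {k : S → ℝ} (hk0 : ∀ s, 0 ≤ k s)
    (hk1 : ∑ s, k s = 1) (s : S) : |k s| ≤ 1 := by
  rw [abs_of_nonneg (hk0 s), ← hk1]
  exact Finset.single_le_sum (fun t _ => hk0 t) (Finset.mem_univ s)

def IsBellmanFixedPoint (r : S → ℝ) (γ : ℝ) (K : S → S → ℝ) (v : S → ℝ) : Prop :=
  ∀ s, v s = r s + γ * ∑ s', K s s' * v s'

lemma abs_sum_mul_le_norm {k : S → ℝ} (hk0 : ∀ s, 0 ≤ k s) (hk1 : ∑ s, k s ≤ 1)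
    (f : S → ℝ) : |∑ s, k s * f s| ≤ ‖f‖ :=
  calc |∑ s, k s * f s| ≤ ∑ s, |k s * f s| := Finset.abs_sum_le_sum_abs _ _
    _ ≤ ∑ s, k s * ‖f‖ := by
        gcongr with s
        rw [abs_mul, abs_of_nonneg (hk0 s)]
        exact mul_le_mul_of_nonneg_left (norm_le_pi_norm f s) (hk0 s)
    _ = (∑ s, k s) * ‖f‖ := (Finset.sum_mul _ _ _).symm
    _ ≤ ‖f‖ := mul_le_of_le_one_left (norm_nonneg f) hk1

theorem IsBellmanFixedPoint.unique {r : S → ℝ} {γ : ℝ} {K : S → S → ℝ} {v w : S → ℝ}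
    (hγ : |γ| < 1) (hK0 : ∀ s s', 0 ≤ K s s') (hK1 : ∀ s, ∑ s', K s s' ≤ 1)
    (hv : IsBellmanFixedPoint r γ K v) (hw : IsBellmanFixedPoint r γ K w) : v = w := by
  have hdiff : ∀ s, (v - w) s = γ * ∑ s', K s s' * (v - w) s' := fun s => by
    simp only [Pi.sub_apply, mul_sub, Finset.sum_sub_distrib]
    rw [hv s, hw s]
    ring
  have hcontract : ‖v - w‖ ≤ |γ| * ‖v - w‖ := by
    refine (pi_norm_le_iff_of_nonneg (by positivity)).mpr fun s => ?_
    rw [Real.norm_eq_abs, hdiff s, abs_mul]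
    exact mul_le_mul_of_nonneg_left (abs_sum_mul_le_norm (hK0 s) (hK1 s) _) (abs_nonneg γ)
  have hzero : ‖v - w‖ = 0 := by nlinarith [norm_nonneg (v - w), abs_nonneg γ]
  exact sub_eq_zero.mp (norm_eq_zero.mp hzero)

end PolicyEvaluation

section Averaging

variable {X A S : Type*} [MeasurableSpace X] [Fintype S] {μ : Measure X}

lemma integral_add_mul_sum_mul {ι : Type*} (t : Finset ι) {r : X → ℝ} {p : ι → X → ℝ}
    (hr : Integrable r μ) (hp : ∀ i, Integrable (p i) μ) (γ : ℝ) (c : ι → ℝ) :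
    ∫ x, (r x + γ * ∑ i ∈ t, p i x * c i) ∂μ
      = ∫ x, r x ∂μ + γ * ∑ i ∈ t, (∫ x, p i x ∂μ) * c i := by
  have hpc : ∀ i ∈ t, Integrable (fun x => p i x * c i) μ := fun i _ => (hp i).mul_const _
  rw [integral_add hr ((integrable_finsetSum t hpc).const_mul γ), integral_const_mul,
    integral_finsetSum t hpc]
  simp only [integral_mul_const]

theorem isBellmanFixedPoint_integral {γ : ℝ} {R Q : S → A → ℝ} {P : S → A → S → ℝ}
    (g : S → X → A) (hR : ∀ s, Integrable (fun x => R s (g s x)) μ)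
    (hP : ∀ s s', Integrable (fun x => P s (g s x) s') μ)
    (hQ : ∀ s a, Q s a = R s a + γ * ∑ s', P s a s' * ∫ x, Q s' (g s' x) ∂μ) :
    IsBellmanFixedPoint (fun s => ∫ x, R s (g s x) ∂μ) γ (fun s s' => ∫ x, P s (g s x) s' ∂μ)
      (fun s => ∫ x, Q s (g s x) ∂μ) := fun s => by
  simp only [hQ s]
  exact integral_add_mul_sum_mul _ (hR s) (hP s) γ _

variable [IsProbabilityMeasure μ]

lemma sum_integral_of_stochastic {p : X → S → ℝ} (hp : ∀ s, Integrable (fun x => p x s) μ)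
    (hp1 : ∀ x, ∑ s, p x s = 1) : ∑ s, ∫ x, p x s ∂μ = 1 := by
  rw [← integral_finsetSum _ fun s _ => hp s]
  simp [hp1]

lemma Measurable.integrable_of_abs_le {f : X → ℝ} (hf : Measurable f) {C : ℝ}
    (hC : ∀ x, |f x| ≤ C) : Integrable f μ :=
  Integrable.of_bound hf.aestronglyMeasurable C (Filter.Eventually.of_forall hC)

end Averaging

theorem smoothed_value_consistency_general {S : Type*} [Fintype S] (m : ℕ) (γ σ Rmax : ℝ)
    (hγ0 : 0 ≤ γ) (hγ1 : γ < 1)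
    (R : S → EuclideanSpace ℝ (Fin m) → ℝ) (hRm : ∀ s, Measurable (R s))
    (hRb : ∀ s a, |R s a| ≤ Rmax)
    (P : S → EuclideanSpace ℝ (Fin m) → S → ℝ)
    (hPm : ∀ s s', Measurable (fun a => P s a s'))
    (hP0 : ∀ s a s', 0 ≤ P s a s') (hP1 : ∀ s a, ∑ s', P s a s' = 1)
    (π : S → EuclideanSpace ℝ (Fin m))
    (Qσ : S → EuclideanSpace ℝ (Fin m) → ℝ)
    (hQσfix : ∀ s a, Qσ s a
      = R s a + γ * ∑ s', P s a s' * ∫ w, Qσ s' (π s' + σ • w) ∂(stdGaussian m))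
    (V : S → ℝ)
    (hV : ∀ s, V s = (∫ w, R s (π s + σ • w) ∂(stdGaussian m))
        + γ * ∑ s', (∫ w, P s (π s + σ • w) s' ∂(stdGaussian m)) * V s') :
    ∀ s, V s = ∫ w, Qσ s (π s + σ • w) ∂(stdGaussian m) := by
  have hperturb : ∀ s, Measurable fun w : EuclideanSpace ℝ (Fin m) => π s + σ • w :=
    fun s => (measurable_id.const_smul σ).const_add (π s)
  have hP : ∀ s s', Integrable (fun w => P s (π s + σ • w) s') (stdGaussian m) :=
    fun s s' => ((hPm s s').comp (hperturb s)).integrable_of_abs_le fun _ =>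
      abs_le_one_of_stochastic (hP0 s _) (hP1 s _) s'
  have hQavg := isBellmanFixedPoint_integral (fun s w => π s + σ • w)
    (fun s => ((hRm s).comp (hperturb s)).integrable_of_abs_le fun _ => hRb s _) hP hQσfix
  have hunique := IsBellmanFixedPoint.unique (abs_lt.mpr ⟨by linarith, hγ1⟩)
    (fun s s' => integral_nonneg fun _ => hP0 s _ s')
    (fun s => (sum_integral_of_stochastic (hP s) fun _ => hP1 s _).le) hV hQavg
  exact congrFun hunique

/-- The value function of the smoothed MDP coincides with the Gaussian average of the
fixed point of the σ-smoothed Bellman operator along the policy. -/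
theorem smoothed_value_consistency {S : Type*} [Fintype S] (m : ℕ) (γ σ Rmax : ℝ)
    (hγ0 : 0 ≤ γ) (hγ1 : γ < 1) (hσ : 0 < σ)
    (R : S → EuclideanSpace ℝ (Fin m) → ℝ) (hRm : ∀ s, Measurable (R s))
    (hRb : ∀ s a, |R s a| ≤ Rmax)
    (P : S → EuclideanSpace ℝ (Fin m) → S → ℝ)
    (hPm : ∀ s s', Measurable (fun a => P s a s'))
    (hP0 : ∀ s a s', 0 ≤ P s a s') (hP1 : ∀ s a, ∑ s', P s a s' = 1)
    (π : S → EuclideanSpace ℝ (Fin m))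
    (Qσ : S → EuclideanSpace ℝ (Fin m) → ℝ) (hQσm : ∀ s, Measurable (Qσ s))
    (hQσb : ∃ C, ∀ s a, |Qσ s a| ≤ C)
    (hQσfix : ∀ s a, Qσ s a
      = R s a + γ * ∑ s', P s a s' * ∫ w, Qσ s' (π s' + σ • w) ∂(stdGaussian m))
    (V : S → ℝ)
    (hV : ∀ s, V s = (∫ w, R s (π s + σ • w) ∂(stdGaussian m))
        + γ * ∑ s', (∫ w, P s (π s + σ • w) s' ∂(stdGaussian m)) * V s') :
    ∀ s, V s = ∫ w, Qσ s (π s + σ • w) ∂(stdGaussian m) :=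
  smoothed_value_consistency_general m γ σ Rmax hγ0 hγ1 R hRm hRb P hPm hP0 hP1 π Qσ hQσfix V hV
end
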